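/- For a monomial algebra Λ, the following are equivalent: (1) there exists no overlap between any two perfect paths in Λ; (2) every perfect path is both elementary and co-elementary; (3) every perfect path is both a sink and a source in the Hasse quiver of (ℙ_Λ, ⪯). -/

import Mathlib

/-! Combinatorial model of a monomial algebra `Λ = KQ/I`.

A finite quiver is given by source and target maps on a type of arrows.
A (nontrivial) path is encoded as a nonempty list of composable arrows;
the admissible monomial ideal `I` is encoded by its set `F` of minimal
generating paths, and a path is zero in `Λ` iff it contains a member of
`F` as a contiguous subpath (infix). -/

/-- A quiver structure on arrow type `E` with vertex type `V`. -/
structure QuiverData (V E : Type) where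
  src : E → V
  tgt : E → V

namespace QuiverData

variable {V E : Type} (Q : QuiverData V E)

/-- `l` is the list of arrows of a path of `Q`. -/
def IsPath (l : List E) : Prop := l.Chain' fun a b => Q.tgt a = Q.src b

/-- Two paths are composable: the target of the first equals the source of
the second (vacuously true if one of them is trivial). -/
def Composable (l m : List E) : Prop :=
  ∀ a ∈ l.getLast?, ∀ b ∈ m.head?, Q.tgt a = Q.src b

end QuiverData

/-- A monomial algebra, encoded combinatorially: a finite quiver together with
the set `F` of minimal paths generating the admissible monomial ideal `I`. -/
structure MonomialData (V E : Type) extends QuiverData V E where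
  F : Set (List E)
  F_path : ∀ f ∈ F, toQuiverData.IsPath f
  F_len : ∀ f ∈ F, 2 ≤ f.length
  F_min : ∀ f ∈ F, ∀ g, g <:+: f → (∃ f' ∈ F, f' <:+: g) → g = f
  admissible : ∃ N, ∀ l, toQuiverData.IsPath l → N ≤ l.length → ∃ f ∈ F, f <:+: l

namespace MonomialData

variable {V E : Type} (M : MonomialData V E)

/-- The path `l` is zero in `Λ`. -/
def IsZero (l : List E) : Prop := ∃ f ∈ M.F, f <:+: l

/-- `l` is a path which is nonzero in `Λ`. -/
def Nonzero (l : List E) : Prop := M.toQuiverData.IsPath l ∧ ¬ M.IsZero l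

/-- A perfect pair of nonzero nontrivial paths, after Chen–Shen–Zhou. -/
def PerfectPair (p q : List E) : Prop :=
  p ≠ [] ∧ q ≠ [] ∧ M.Nonzero p ∧ M.Nonzero q ∧
  M.toQuiverData.Composable p q ∧ M.IsZero (p ++ q) ∧
  (∀ q', q' ≠ [] → M.Nonzero q' → M.toQuiverData.Composable p q' →
      M.IsZero (p ++ q') → q <+: q') ∧
  (∀ p', p' ≠ [] → M.Nonzero p' → M.toQuiverData.Composable p' q →
      M.IsZero (p' ++ q) → p <:+ p')

/-- A perfect path: a path appearing in a perfect path sequence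
`(p₁, …, pₙ, pₙ₊₁ = p₁)`, encoded by a periodic sequence of paths each of
whose consecutive pairs is perfect. -/
def IsPerfect (p : List E) : Prop :=
  ∃ (n : ℕ) (s : ℕ → List E), 0 < n ∧ s 0 = p ∧ (∀ i, s (i + n) = s i) ∧
    ∀ i, M.PerfectPair (s i) (s (i + 1))

/-- `c` is the underlying cycle associated with the perfect path `p`:
the shortest cycle `c` with `p₁ ⋯ pₙ = cˡ` for some `l > 0`, for a perfect
path sequence through `p`. -/
def IsUnderlyingCycleOf (c p : List E) : Prop :=
  ∃ (n : ℕ) (s : ℕ → List E), 0 < n ∧ s 0 = p ∧ (∀ i, s (i + n) = s i) ∧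
    (∀ i, M.PerfectPair (s i) (s (i + 1))) ∧
    (∃ l, 0 < l ∧ ((List.range n).map s).flatten = (List.replicate l c).flatten) ∧
    (∀ c' l', 0 < l' → ((List.range n).map s).flatten = (List.replicate l' c').flatten →
      c.length ≤ c'.length)


/-- There is an overlap between the perfect paths `p` and `q` (`p` overlaps `q`). -/
def Overlap (p q : List E) : Prop :=
  ∃ x p' q' : List E, x ≠ [] ∧ p = p' ++ x ∧ q = x ++ q' ∧
    M.Nonzero (p' ++ x ++ q') ∧ (p = q → p' ≠ [] ∧ q' ≠ [])

/-- An elementary perfect path: a source in the Hasse quiver of the left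
divisibility order `⪯` on perfect paths, i.e. it is not a proper left divisor
of any perfect path. -/
def Elementary (p : List E) : Prop :=
  M.IsPerfect p ∧ ¬ ∃ q, M.IsPerfect q ∧ p <+: q ∧ p ≠ q

/-- A co-elementary perfect path: a sink in the Hasse quiver of `⪯`, i.e.
no proper left divisor of it is perfect. -/
def CoElementary (p : List E) : Prop :=
  M.IsPerfect p ∧ ¬ ∃ q, M.IsPerfect q ∧ q <+: p ∧ q ≠ p

/-- There is an arrow `q ⟶ p` in the Hasse quiver of `(ℙ_Λ, ⪯)`:
`p ≺ q` and no perfect path lies strictly between them. -/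
def HasseArrowPrec (q p : List E) : Prop :=
  M.IsPerfect p ∧ M.IsPerfect q ∧ p <+: q ∧ p ≠ q ∧
    ¬ ∃ r, M.IsPerfect r ∧ p <+: r ∧ p ≠ r ∧ r <+: q ∧ r ≠ q

end MonomialData

/-- Two cycles are equivalent (agree up to cyclic permutation): each is a
subpath of a power of the other. -/
def CyclesEquiv {E : Type} (c d : List E) : Prop :=
  ∃ m k, 0 < m ∧ 0 < k ∧ c <:+: (List.replicate m d).flatten ∧
    d <:+: (List.replicate k c).flatten

/-! If two perfect paths `p = p'x` and `q = xy` overlap, the one-sided minimality of perfect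
pairs pushes the overlap along their perfect path sequences: as long as no perfect path
properly divides another, the successors split as `p₁ = y x₁`, `q₁ = x₁ y₁`, and so on.
The pieces `x₀, p₁y₁, x₂, p₃y₃, …` then form a chain of perfect pairs; it takes only
finitely many values and each of its entries determines its neighbours, so it is periodic
and `x₀` is a perfect path properly dividing `q`. Conversely a proper divisibility `p ≺ q`
of perfect paths is itself an overlap. Lengths increase strictly along `≺`, so `≺` has
covers, which identifies elementary paths with sources and co-elementary paths with sinks
of the Hasse quiver. -/

open List Function

namespace List

variable {α : Type*}

theorem exists_append_of_infix_append {f a b : List α} (h : f <:+: a ++ b)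
    (ha : ¬f <:+: a) (hb : ¬f <:+: b) :
    ∃ y z, y ≠ [] ∧ z ≠ [] ∧ f = y ++ z ∧ y <:+ a ∧ z <+: b := by
  obtain ⟨l, r, h⟩ := h
  rcases append_eq_append_iff.1 h with ⟨t, rfl, -⟩ | ⟨t, hlf, rfl⟩
  · exact absurd (infix_append l f t) ha
  rcases append_eq_append_iff.1 hlf with ⟨y, rfl, rfl⟩ | ⟨t', rfl, rfl⟩
  · refine ⟨y, t, ?_, ?_, rfl, suffix_append l y, prefix_append t r⟩
    · rintro rfl
      exact hb (by simpa using (prefix_append t r).isInfix)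
    · rintro rfl
      exact ha (by simpa using (suffix_append l y).isInfix)
  · exact absurd (infix_append t' f r) hb

theorem finite_setOf_infix (l : List α) : {t | t <:+: l}.Finite :=
  l.sublists.finite_toSet.subset fun _ ht => mem_sublists.2 ht.sublist

end List

theorem Function.Periodic.finite_range_nat {α : Type*} {f : ℕ → α} {n : ℕ}
    (hf : Periodic f n) (hn : 0 < n) : (Set.range f).Finite :=
  ((Set.finite_Iio n).image f).subset <| by
    rintro _ ⟨i, rfl⟩
    exact ⟨i % n, Nat.mod_lt i hn, hf.map_mod_nat i⟩

namespace QuiverData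

variable {V E : Type} {Q : QuiverData V E} {l m k : List E}

theorem isPath_append : Q.IsPath (l ++ m) ↔ Q.IsPath l ∧ Q.IsPath m ∧ Q.Composable l m :=
  isChain_append

theorem IsPath.infix (h : Q.IsPath m) (hlm : l <:+: m) : Q.IsPath l :=
  IsChain.infix h hlm

theorem composable_append_left_iff (hm : m ≠ []) :
    Q.Composable (l ++ m) k ↔ Q.Composable m k := by
  simp only [Composable, getLast?_append_of_ne_nil _ hm]

theorem composable_append_right_iff (hm : m ≠ []) :
    Q.Composable l (m ++ k) ↔ Q.Composable l m := by
  simp only [Composable, head?_append_of_ne_nil _ hm]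

end QuiverData

namespace MonomialData

open QuiverData

variable {V E : Type} {M : MonomialData V E} {a a' b b' c l m p q x y x' y' : List E}

theorem IsZero.mono (h : M.IsZero l) (hlm : l <:+: m) : M.IsZero m :=
  let ⟨f, hf, hfl⟩ := h
  ⟨f, hf, hfl.trans hlm⟩

theorem Nonzero.of_infix (h : M.Nonzero m) (hlm : l <:+: m) : M.Nonzero l :=
  ⟨h.1.infix hlm, fun hz => h.2 (hz.mono hlm)⟩

theorem exists_mem_F_of_isZero_append (hl : M.Nonzero l) (hm : M.Nonzero m)
    (h : M.IsZero (l ++ m)) :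
    ∃ y z, y ≠ [] ∧ z ≠ [] ∧ y <:+ l ∧ z <+: m ∧ y ++ z ∈ M.F := by
  obtain ⟨f, hf, hfl⟩ := h
  obtain ⟨y, z, hy, hz, rfl, hyl, hzm⟩ :=
    exists_append_of_infix_append hfl (fun h => hl.2 ⟨f, hf, h⟩) (fun h => hm.2 ⟨f, hf, h⟩)
  exact ⟨y, z, hy, hz, hyl, hzm, hf⟩

namespace PerfectPair

theorem ne_nil_left (h : M.PerfectPair p q) : p ≠ [] := h.1
theorem ne_nil_right (h : M.PerfectPair p q) : q ≠ [] := h.2.1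
theorem nonzero_left (h : M.PerfectPair p q) : M.Nonzero p := h.2.2.1
theorem nonzero_right (h : M.PerfectPair p q) : M.Nonzero q := h.2.2.2.1
theorem composable (h : M.PerfectPair p q) : M.Composable p q := h.2.2.2.2.1
theorem isZero (h : M.PerfectPair p q) : M.IsZero (p ++ q) := h.2.2.2.2.2.1

/-- The minimality of `a'` among right complements of `a`, extended to complements of a
suffix of `a`. -/
theorem prefix_of_isZero_append (h : M.PerfectPair a a') (hc : c <:+ a) (hq : M.Nonzero q)
    (hz : M.IsZero (c ++ q)) : a' <+: q := by
  obtain ⟨y, z, hy, hz, hyc, hzq, hF⟩ :=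
    exists_mem_F_of_isZero_append (h.nonzero_left.of_infix hc.isInfix) hq hz
  obtain ⟨t, rfl⟩ := hyc.trans hc
  refine (h.2.2.2.2.2.2.1 z hz (hq.of_infix hzq.isInfix) ?_ ?_).trans hzq
  · exact (composable_append_left_iff hy).2 (isPath_append.1 (M.F_path _ hF)).2.2
  · exact ⟨y ++ z, hF, t, [], by simp⟩

theorem suffix_of_isZero_append (h : M.PerfectPair a a') (hc : c <+: a') (hp : M.Nonzero p)
    (hz : M.IsZero (p ++ c)) : a <:+ p := by
  obtain ⟨y, z, hy, hz, hyp, hzc, hF⟩ :=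
    exists_mem_F_of_isZero_append hp (h.nonzero_right.of_infix hc.isInfix) hz
  obtain ⟨t, rfl⟩ := hzc.trans hc
  refine (h.2.2.2.2.2.2.2 y hy (hp.of_infix hyp.isInfix) ?_ ?_).trans hyp
  · exact (composable_append_right_iff hz).2 (isPath_append.1 (M.F_path _ hF)).2.2
  · exact ⟨y ++ z, hF, [], t, by simp⟩

theorem unique_left (h₁ : M.PerfectPair a c) (h₂ : M.PerfectPair b c) : a = b :=
  infix_antisymm (h₁.suffix_of_isZero_append prefix_rfl h₂.nonzero_left h₂.isZero).isInfix
    (h₂.suffix_of_isZero_append prefix_rfl h₁.nonzero_left h₁.isZero).isInfix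

theorem unique_right (h₁ : M.PerfectPair c a) (h₂ : M.PerfectPair c b) : a = b :=
  infix_antisymm (h₁.prefix_of_isZero_append suffix_rfl h₂.nonzero_right h₂.isZero).isInfix
    (h₂.prefix_of_isZero_append suffix_rfl h₁.nonzero_right h₁.isZero).isInfix

theorem eq_of_suffix (ha : M.PerfectPair a a') (hb : M.PerfectPair b b')
    (h : a' <+: b' → a' = b') (hba : b <:+ a) : b = a := by
  have hab' : a' = b' := h (ha.prefix_of_isZero_append hba hb.nonzero_right hb.isZero)
  subst hab'
  exact hb.unique_left ha

end PerfectPair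

theorem isPerfect_of_periodic {s : ℕ → List E} {n : ℕ} (hn : 0 < n) (hper : Periodic s n)
    (hs : ∀ i, M.PerfectPair (s i) (s (i + 1))) (i : ℕ) : M.IsPerfect (s i) :=
  ⟨n, fun j => s (i + j), hn, rfl, fun j => by simpa [add_assoc] using hper (i + j),
    fun j => hs (i + j)⟩

theorem IsPerfect.ne_nil (h : M.IsPerfect p) : p ≠ [] := by
  obtain ⟨n, s, -, rfl, -, hs⟩ := h
  exact (hs 0).ne_nil_left

theorem IsPerfect.nonzero (h : M.IsPerfect p) : M.Nonzero p := by
  obtain ⟨n, s, -, rfl, -, hs⟩ := h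
  exact (hs 0).nonzero_left

/-- Each entry of a chain of perfect pairs determines its neighbours, so a repetition makes
the chain periodic from its start on. -/
theorem isPerfect_of_finite_range {w : ℕ → List E} (hw : ∀ k, M.PerfectPair (w k) (w (k + 1)))
    (hfin : (Set.range w).Finite) : M.IsPerfect (w 0) := by
  obtain ⟨i, j, hij, hwij⟩ := hfin.exists_lt_map_eq_of_forall_mem (f := w) Set.mem_range_self
  have hback : ∀ k ≤ i, w (i - k) = w (j - k) := by
    intro k
    induction k with
    | zero => simpa using hwij
    | succ k ih =>
      intro hk
      have h₁ := hw (i - (k + 1))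
      have h₂ := hw (j - (k + 1))
      rw [show i - (k + 1) + 1 = i - k by omega, ih (by omega)] at h₁
      rw [show j - (k + 1) + 1 = j - k by omega] at h₂
      exact h₁.unique_left h₂
  have hper : Periodic w (j - i) := by
    intro k
    induction k with
    | zero => simpa using (hback i le_rfl).symm
    | succ k ih =>
      have h := hw (k + (j - i))
      rw [ih, show k + (j - i) + 1 = k + 1 + (j - i) by omega] at h
      exact (hw k).unique_right h |>.symm
  exact ⟨j - i, w, by omega, rfl, hper, hw⟩

/-- `a = _ ++ x` and `b = x ++ y` overlap in `x`, and `b` sticks out of `a` by `y ≠ []`. -/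
structure OverlapVia (M : MonomialData V E) (a b x y : List E) : Prop where
  ne_nil_left : x ≠ []
  ne_nil_right : y ≠ []
  suffix : x <:+ a
  eq_append : b = x ++ y
  nonzero : M.Nonzero (a ++ y)

namespace OverlapVia

theorem succ (ha : M.PerfectPair a a') (hb : M.PerfectPair b b') (hsuf : b' <:+ a' → b' = a')
    (h : M.OverlapVia a b x y) : ∃ x' y', a' = y ++ x' ∧ M.OverlapVia a' b' x' y' := by
  obtain ⟨hx, hy, hxa, rfl, hay⟩ := h
  have hyb : M.Nonzero (y ++ b') := by
    refine ⟨isPath_append.2 ⟨hb.nonzero_left.1.infix (suffix_append x y).isInfix,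
      hb.nonzero_right.1, (composable_append_left_iff hy).1 hb.composable⟩, fun hz => hx ?_⟩
    simpa using (hb.suffix_of_isZero_append prefix_rfl
      (hb.nonzero_left.of_infix (suffix_append x y).isInfix) hz).length_le
  have ha' : a' <+: y ++ b' :=
    ha.prefix_of_isZero_append hxa hyb (by simpa [append_assoc] using hb.isZero)
  have hza : ¬a' <+: y := fun ht =>
    hay.2 (ha.isZero.mono ((prefix_append_right_inj a).2 ht).isInfix)
  obtain ⟨x', rfl⟩ := (prefix_or_prefix_of_prefix ha' (prefix_append y b')).resolve_left hza
  obtain ⟨y', rfl⟩ := (prefix_append_right_inj y).1 ha'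
  refine ⟨x', y', rfl, ?_, ?_, suffix_append y x', rfl, by simpa [append_assoc] using hyb⟩
  · rintro rfl
    exact hza (by simp)
  · rintro rfl
    have := congrArg length (hsuf (by simp))
    simp only [append_nil, length_append] at this
    exact hy (length_eq_zero_iff.1 (by omega))

theorem perfectPair_left (ha : M.PerfectPair a a') (hb : M.PerfectPair b b')
    (h : M.OverlapVia a b x y) (h' : M.OverlapVia a' b' x' y') (hl : a' = y ++ x') :
    M.PerfectPair x (a' ++ y') := by
  obtain ⟨hx, hy, hxa, rfl, -⟩ := h
  obtain ⟨-, hy', -, rfl, ha'y'⟩ := h'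
  subst hl
  refine ⟨hx, by simp [hy'], hb.nonzero_left.of_infix (prefix_append x y).isInfix, ha'y', ?_,
    by simpa [append_assoc] using hb.isZero, ?_, ?_⟩
  · rw [append_assoc, composable_append_right_iff hy]
    exact (isPath_append.1 hb.nonzero_left.1).2.2
  · intro q _ hq _ hz
    obtain ⟨q', rfl⟩ := ha.prefix_of_isZero_append hxa hq hz
    have hxq : M.Nonzero (x' ++ q') :=
      hq.of_infix (by simpa [append_assoc] using (suffix_append y (x' ++ q')).isInfix)
    have := hb.prefix_of_isZero_append suffix_rfl hxq (by simpa [append_assoc] using hz)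
    simpa [append_assoc] using this
  · intro p _ hp hpc hz
    by_cases hpa : M.IsZero (p ++ (y ++ x'))
    · exact hxa.trans (ha.suffix_of_isZero_append prefix_rfl hp hpa)
    have hpa' : M.Nonzero (p ++ (y ++ x')) :=
      ⟨isPath_append.2 ⟨hp.1, ha.nonzero_right.1,
        (composable_append_right_iff ha.ne_nil_right).1 hpc⟩, hpa⟩
    have := hb.suffix_of_isZero_append prefix_rfl
      (hpa'.of_infix ((prefix_append_right_inj p).2 (prefix_append y x')).isInfix)
      (by simpa [append_assoc] using hz)
    exact suffix_append_self_iff.1 this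

theorem perfectPair_right (ha : M.PerfectPair a a') (hb : M.PerfectPair b b')
    (h : M.OverlapVia a b x y) (h' : M.OverlapVia a' b' x' y') (hl : a' = y ++ x') :
    M.PerfectPair (a ++ y) x' := by
  obtain ⟨hx, hy, -, rfl, hay⟩ := h
  obtain ⟨hx', -, -, rfl, -⟩ := h'
  subst hl
  refine ⟨by simp [hy], hx', hay, ha.nonzero_right.of_infix (suffix_append y x').isInfix, ?_,
    by simpa [append_assoc] using ha.isZero, ?_, ?_⟩
  · rw [composable_append_left_iff hy]
    exact (isPath_append.1 ha.nonzero_right.1).2.2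
  · intro q _ hq hqc hz
    by_cases hyq : M.IsZero (y ++ q)
    · exact (prefix_append x' _).trans (hb.prefix_of_isZero_append (suffix_append x y) hq hyq)
    have hyq' : M.Nonzero (y ++ q) :=
      ⟨isPath_append.2 ⟨hb.nonzero_left.1.infix (suffix_append x y).isInfix, hq.1,
        (composable_append_left_iff hy).1 hqc⟩, hyq⟩
    exact (prefix_append_right_inj y).1
      (ha.prefix_of_isZero_append suffix_rfl hyq' (by simpa [append_assoc] using hz))
  · intro p _ hp _ hz
    obtain ⟨m, rfl⟩ := hb.suffix_of_isZero_append (prefix_append x' _) hp hz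
    have := ha.suffix_of_isZero_append prefix_rfl
      (hp.of_infix (by simpa [append_assoc] using (prefix_append (m ++ x) y).isInfix))
      (by simpa [append_assoc] using hz)
    simpa [append_assoc] using (suffix_append_self_iff (l₃ := y)).2 this

end OverlapVia

section Sequences

variable {s u : ℕ → List E}

theorem exists_overlapVia_seq (hs : ∀ i, M.PerfectPair (s i) (s (i + 1)))
    (hu : ∀ i, M.PerfectPair (u i) (u (i + 1))) (hsuf : ∀ i, u i <:+ s i → u i = s i)
    (h₀ : M.OverlapVia (s 0) (u 0) x y) :
    ∃ xs ys : ℕ → List E, (∀ i, M.OverlapVia (s i) (u i) (xs i) (ys i)) ∧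
      ∀ i, s (i + 1) = ys i ++ xs (i + 1) := by
  choose! nx ny hnext using fun i x y (h : M.OverlapVia (s i) (u i) x y) =>
    h.succ (hs i) (hu i) (hsuf (i + 1))
  let xy : ℕ → List E × List E := fun i =>
    Nat.rec (x, y) (fun i p => (nx i p.1 p.2, ny i p.1 p.2)) i
  have hxy : ∀ i, M.OverlapVia (s i) (u i) (xy i).1 (xy i).2 := by
    intro i
    induction i with
    | zero => exact h₀
    | succ i ih => exact (hnext i _ _ ih).2
  exact ⟨fun i => (xy i).1, fun i => (xy i).2, hxy, fun i => (hnext i _ _ (hxy i)).1⟩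

/-- The alternating chain `x₀, s₁ y₁, x₂, s₃ y₃, …` of perfect pairs runs through
infixes of the finitely many paths `uᵢ uᵢ₊₁`. -/
theorem isPerfect_of_overlapVia_seq {m : ℕ} (hm : 0 < m) (hper : Periodic u m)
    (hs : ∀ i, M.PerfectPair (s i) (s (i + 1))) (hu : ∀ i, M.PerfectPair (u i) (u (i + 1)))
    {xs ys : ℕ → List E} (hov : ∀ i, M.OverlapVia (s i) (u i) (xs i) (ys i))
    (hlink : ∀ i, s (i + 1) = ys i ++ xs (i + 1)) : M.IsPerfect (xs 0) := by
  let w : ℕ → List E := fun k => if Even k then xs k else s k ++ ys k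
  have hw : ∀ k, M.PerfectPair (w k) (w (k + 1)) := by
    intro k
    rcases Nat.even_or_odd k with hk | hk
    · simp only [w, if_pos hk, if_neg (Nat.even_add_one.not.2 (not_not.2 hk))]
      exact (hov k).perfectPair_left (hs k) (hu k) (hov (k + 1)) (hlink k)
    · simp only [w, if_neg (Nat.not_even_iff_odd.2 hk), if_pos hk.add_one]
      exact (hov k).perfectPair_right (hs k) (hu k) (hov (k + 1)) (hlink k)
  have hfin : (Set.range w).Finite := by
    have hpairs : Periodic (fun i => u i ++ u (i + 1)) m := fun i => by
      simp only [hper i, add_right_comm i m 1, hper (i + 1)]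
    refine ((hpairs.finite_range_nat hm).biUnion fun l _ => l.finite_setOf_infix).subset ?_
    rintro _ ⟨k, rfl⟩
    simp only [Set.mem_iUnion, Set.mem_range, Set.mem_ofPred_eq, exists_prop,
      exists_exists_eq_and]
    rcases Nat.even_or_odd' k with ⟨j, rfl | rfl⟩
    · refine ⟨2 * j, ?_⟩
      simp only [w, even_two_mul, if_true, (hov (2 * j)).eq_append]
      exact (infix_append [] _ _).trans (prefix_append _ _).isInfix
    · refine ⟨2 * j, ?_⟩
      have hodd : ¬Even (2 * j + 1) := Nat.not_even_iff_odd.2 (odd_two_mul_add_one j)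
      simp only [w, hodd, if_false, hlink, (hov (2 * j + 1)).eq_append, (hov (2 * j)).eq_append]
      simpa [append_assoc] using infix_append (xs (2 * j)) _ []
  simpa [w] using isPerfect_of_finite_range hw hfin

end Sequences

theorem not_overlap_of_forall_elementary (hE : ∀ r, M.IsPerfect r → M.Elementary r)
    (hp : M.IsPerfect p) (hq : M.IsPerfect q) : ¬M.Overlap p q := by
  have hpre : ∀ {a b}, M.IsPerfect a → M.IsPerfect b → a <+: b → a = b :=
    fun ha hb hab => by_contra fun hne => (hE _ ha).2 ⟨_, hb, hab, hne⟩
  obtain ⟨n, s, hn, rfl, hsper, hs⟩ := hp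
  obtain ⟨m, u, hm, rfl, huper, hu⟩ := hq
  have hsuf : ∀ i, u i <:+ s i → u i = s i := fun i => (hs i).eq_of_suffix (hu i)
    (hpre (isPerfect_of_periodic hn hsper hs _) (isPerfect_of_periodic hm huper hu _))
  rintro ⟨x, p', y, hx, hs0, hu0, hnz, hpq⟩
  rcases eq_or_ne y [] with rfl | hy
  · exact (hpq (hsuf 0 (by simp [hs0, hu0])).symm).2 rfl
  obtain ⟨xs, ys, hov, hlink⟩ := exists_overlapVia_seq hs hu hsuf
    ⟨hx, hy, hs0 ▸ suffix_append p' x, hu0, by simpa [hs0] using hnz⟩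
  have hxu : xs 0 = u 0 := hpre (isPerfect_of_overlapVia_seq hm huper hs hu hov hlink)
    (isPerfect_of_periodic hm huper hu 0) ((hov 0).eq_append ▸ prefix_append _ _)
  exact (hov 0).ne_nil_right (by simpa [(hov 0).eq_append] using hxu)

theorem Overlap.of_prefix (hp : p ≠ []) (hq : M.Nonzero q) (hpq : p <+: q) (hne : p ≠ q) :
    M.Overlap p q := by
  obtain ⟨t, rfl⟩ := hpq
  exact ⟨p, [], t, hp, rfl, rfl, by simpa using hq, fun h => absurd h hne⟩

theorem elementary_and_coElementary_of_not_overlap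
    (h : ¬∃ p q, M.IsPerfect p ∧ M.IsPerfect q ∧ M.Overlap p q) (hp : M.IsPerfect p) :
    M.Elementary p ∧ M.CoElementary p :=
  ⟨⟨hp, fun ⟨q, hq, hpq, hne⟩ => h ⟨p, q, hp, hq, .of_prefix hp.ne_nil hq.nonzero hpq hne⟩⟩,
    ⟨hp, fun ⟨q, hq, hqp, hne⟩ => h ⟨q, p, hq, hp, .of_prefix hq.ne_nil hp.nonzero hqp hne⟩⟩⟩

theorem exists_hasseArrowPrec_to (hp : M.IsPerfect p) (hq : M.IsPerfect q) (hpq : p <+: q)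
    (hne : p ≠ q) : ∃ r, M.HasseArrowPrec r p := by
  obtain ⟨r, ⟨hr, hpr, hpr'⟩, hmin⟩ := (measure length).wf.has_min
    {r | M.IsPerfect r ∧ p <+: r ∧ p ≠ r} ⟨q, hq, hpq, hne⟩
  exact ⟨r, hp, hr, hpr, hpr', fun ⟨w, hw, hpw, hpw', hwr, hwr'⟩ =>
    hmin w ⟨hw, hpw, hpw'⟩ (lt_of_le_of_ne hwr.length_le (mt hwr.eq_of_length hwr'))⟩

theorem exists_hasseArrowPrec_from (hp : M.IsPerfect p) (hq : M.IsPerfect q) (hqp : q <+: p)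
    (hne : q ≠ p) : ∃ r, M.HasseArrowPrec p r := by
  obtain ⟨r, ⟨hr, hrp, hrp'⟩, hmin⟩ := (measure fun r : List E => p.length - r.length).wf.has_min
    {r | M.IsPerfect r ∧ r <+: p ∧ r ≠ p} ⟨q, hq, hqp, hne⟩
  refine ⟨r, hr, hp, hrp, hrp', fun ⟨w, hw, hrw, hrw', hwp, hwp'⟩ => hmin w ⟨hw, hwp, hwp'⟩ ?_⟩
  have := lt_of_le_of_ne hrw.length_le (mt hrw.eq_of_length hrw')
  have := hwp.length_le
  exact Nat.sub_lt_sub_left (by omega) (by omega)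

theorem elementary_iff : M.Elementary p ↔ M.IsPerfect p ∧ ¬∃ q, M.HasseArrowPrec q p :=
  ⟨fun ⟨hp, h⟩ => ⟨hp, fun ⟨q, hq⟩ => h ⟨q, hq.2.1, hq.2.2.1, hq.2.2.2.1⟩⟩,
    fun ⟨hp, h⟩ => ⟨hp, fun ⟨_, hq, hpq, hne⟩ => h (exists_hasseArrowPrec_to hp hq hpq hne)⟩⟩

theorem coElementary_iff : M.CoElementary p ↔ M.IsPerfect p ∧ ¬∃ q, M.HasseArrowPrec p q :=
  ⟨fun ⟨hp, h⟩ => ⟨hp, fun ⟨q, hq⟩ => h ⟨q, hq.1, hq.2.2.1, hq.2.2.2.1⟩⟩,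
    fun ⟨hp, h⟩ => ⟨hp, fun ⟨_, hq, hqp, hne⟩ => h (exists_hasseArrowPrec_from hp hq hqp hne)⟩⟩

end MonomialData

/-- equivalent are: (1) no overlap between any two perfect
paths; (2) every perfect path is both elementary and co-elementary;
(3) every perfect path is both a sink and a source in the Hasse quiver of
`(ℙ_Λ, ⪯)`. -/
theorem no_overlap_tfae {V E : Type} (M : MonomialData V E) :
    ((¬ ∃ p q, M.IsPerfect p ∧ M.IsPerfect q ∧ M.Overlap p q) ↔
      (∀ p, M.IsPerfect p → M.Elementary p ∧ M.CoElementary p)) ∧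
    ((∀ p, M.IsPerfect p → M.Elementary p ∧ M.CoElementary p) ↔
      (∀ p, M.IsPerfect p →
        (¬ ∃ q, M.HasseArrowPrec p q) ∧ (¬ ∃ q, M.HasseArrowPrec q p))) := by
  refine ⟨⟨fun h _ => MonomialData.elementary_and_coElementary_of_not_overlap h, ?_⟩, ?_⟩
  · rintro h ⟨_, _, hp, hq, hpq⟩
    exact MonomialData.not_overlap_of_forall_elementary (fun r hr => (h r hr).1) hp hq hpq
  · refine forall_congr' fun p => imp_congr_right fun hp => ?_
    rw [MonomialData.elementary_iff, MonomialData.coElementary_iff]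
    tauto
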